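/- arXiv:1002.3615 — 2 statements merged into one kernel-verified Lean document; each statement's English description precedes it below -/
import Mathlib

section
/- If Γ₁ + iΓ₂ = (ε₁+iε₂)·g₁(ε₁²+ε₂²) with g₁ real-valued and differentiable, and the ellipticities respond to shear (at γ=κ=0) according to the pure-ellipse transformation law ε_i = ε_i^S + 2γ_i(1−(ε_i^S)²) − 2γ_j ε_1^S ε_2^S (j≠i), then the condition ∂Γ₁/∂γ₁ + ∂Γ₂/∂γ₂ = 2 is equivalent to 2(2−u)g₁(u) + 4u(1−u)g₁'(u) = 2, where u = ε₁²+ε₂². -/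
theorem HasDerivAt.mul_comp_sq_add_sq {a b c g : ℝ → ℝ} {a' b' c' g' x : ℝ}
    (ha : HasDerivAt a a' x) (hb : HasDerivAt b b' x) (hc : HasDerivAt c c' x)
    (hg : HasDerivAt g g' (a x ^ 2 + b x ^ 2)) :
    HasDerivAt (fun t => c t * g (a t ^ 2 + b t ^ 2))
      (c' * g (a x ^ 2 + b x ^ 2) + c x * (g' * (2 * a x * a' + 2 * b x * b'))) x := by
  have hq : HasDerivAt (fun t => a t ^ 2 + b t ^ 2) (2 * a x * a' + 2 * b x * b') x := by
    refine ((ha.fun_pow 2).fun_add (hb.fun_pow 2)).congr_deriv ?_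
    norm_num
  exact hc.mul (hg.comp x hq)

/-- The left side is `∂Γ₁/∂γ₁ + ∂Γ₂/∂γ₂` expanded by the chain rule under the pure-ellipse law,
with `G = g₁ u` and `G' = g₁' u`. -/
theorem pureEllipse_divergence_eq (s1 s2 G G' : ℝ) :
    (2 * (1 - s1 ^ 2) * G
        + s1 * (G' * (2 * s1 * (2 * (1 - s1 ^ 2)) + 2 * s2 * (-2 * s1 * s2))))
      + (2 * (1 - s2 ^ 2) * G
        + s2 * (G' * (2 * s1 * (-2 * s1 * s2) + 2 * s2 * (2 * (1 - s2 ^ 2)))))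
      = 2 * (2 - (s1 ^ 2 + s2 ^ 2)) * G
        + 4 * (s1 ^ 2 + s2 ^ 2) * (1 - (s1 ^ 2 + s2 ^ 2)) * G' := by
  ring

theorem stmt10_general (e1 e2 : ℝ × ℝ → ℝ) (s1 s2 : ℝ)
    (hs1 : e1 (0, 0) = s1) (hs2 : e2 (0, 0) = s2)
    (u : ℝ) (hu : u = s1 ^ 2 + s2 ^ 2)
    (g₁ g₁' : ℝ → ℝ) (hg : ∀ t, HasDerivAt g₁ (g₁' t) t)
    -- partial derivatives of the ellipticities with respect to (γ₁, γ₂) at 0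
    (h11 : HasDerivAt (fun t : ℝ => e1 (t, 0)) (2 * (1 - s1 ^ 2)) 0)
    (h12 : HasDerivAt (fun t : ℝ => e1 (0, t)) (-2 * s1 * s2) 0)
    (h21 : HasDerivAt (fun t : ℝ => e2 (t, 0)) (-2 * s1 * s2) 0)
    (h22 : HasDerivAt (fun t : ℝ => e2 (0, t)) (2 * (1 - s2 ^ 2)) 0)
    (Γ₁ Γ₂ : ℝ × ℝ → ℝ)
    (hΓ₁ : ∀ v, Γ₁ v = e1 v * g₁ (e1 v ^ 2 + e2 v ^ 2))
    (hΓ₂ : ∀ v, Γ₂ v = e2 v * g₁ (e1 v ^ 2 + e2 v ^ 2)) :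
    deriv (fun t : ℝ => Γ₁ (t, 0)) 0 + deriv (fun t : ℝ => Γ₂ (0, t)) 0 = 2 ↔
      2 * (2 - u) * g₁ u + 4 * u * (1 - u) * g₁' u = 2 := by
  have hd1 := h11.mul_comp_sq_add_sq h21 h11 (hg _)
  have hd2 := h12.mul_comp_sq_add_sq h22 h22 (hg _)
  simp only [hs1, hs2] at hd1 hd2
  simp only [hΓ₁, hΓ₂, hd1.deriv, hd2.deriv, pureEllipse_divergence_eq, ← hu]

/-- For `Γ₁ + iΓ₂ = (ε₁+iε₂)g₁(ε₁²+ε₂²)` with `g₁` real and differentiable, and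
ellipticities responding to shear (at zero shear) by the pure-ellipse law
`∂ε₁/∂γ₁ = 2(1−ε₁²)`, `∂ε₁/∂γ₂ = ∂ε₂/∂γ₁ = −2ε₁ε₂`, `∂ε₂/∂γ₂ = 2(1−ε₂²)`,
the condition `∂Γ₁/∂γ₁ + ∂Γ₂/∂γ₂ = 2` is equivalent to the ODE
`2(2−u)g₁(u) + 4u(1−u)g₁'(u) = 2` with `u = ε₁²+ε₂²`. -/
theorem stmt10 (e1 e2 : ℝ × ℝ → ℝ) (s1 s2 : ℝ)
    (hs1 : e1 (0, 0) = s1) (hs2 : e2 (0, 0) = s2)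
    (u : ℝ) (hu : u = s1 ^ 2 + s2 ^ 2) (huI : u ∈ Set.Ioo (0:ℝ) 1)
    (g₁ g₁' : ℝ → ℝ) (hg : ∀ t, HasDerivAt g₁ (g₁' t) t)
    -- partial derivatives of the ellipticities with respect to (γ₁, γ₂) at 0
    (h11 : HasDerivAt (fun t : ℝ => e1 (t, 0)) (2 * (1 - s1 ^ 2)) 0)
    (h12 : HasDerivAt (fun t : ℝ => e1 (0, t)) (-2 * s1 * s2) 0)
    (h21 : HasDerivAt (fun t : ℝ => e2 (t, 0)) (-2 * s1 * s2) 0)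
    (h22 : HasDerivAt (fun t : ℝ => e2 (0, t)) (2 * (1 - s2 ^ 2)) 0)
    (Γ₁ Γ₂ : ℝ × ℝ → ℝ)
    (hΓ₁ : ∀ v, Γ₁ v = e1 v * g₁ (e1 v ^ 2 + e2 v ^ 2))
    (hΓ₂ : ∀ v, Γ₂ v = e2 v * g₁ (e1 v ^ 2 + e2 v ^ 2)) :
    deriv (fun t : ℝ => Γ₁ (t, 0)) 0 + deriv (fun t : ℝ => Γ₂ (0, t)) 0 = 2 ↔
      2 * (2 - u) * g₁ u + 4 * u * (1 - u) * g₁' u = 2 :=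
  stmt10_general e1 e2 s1 s2 hs1 hs2 u hu g₁ g₁' hg h11 h12 h21 h22 Γ₁ Γ₂ hΓ₁ hΓ₂
end

section
/- For a source brightness of the form f_S(a(x²+y²) + b(x²−y²) + 2cxy) with a+b > 0 and a² − b² > c², the ellipticities of the image are ε₁ = −b/a and ε₂ = −c/a. -/
/-!
Write `R(x) = xᵀ M x` with `M = [[a+b, c], [c, a-b]]`, `det M = a² - b² - c² = d² > 0`, and let
`J` be the rotation by a right angle. The map `T = J M / d` has determinant one, satisfies
`T² = -1`, and preserves `R` because `Jᵀ M J = adj M = d² M⁻¹`. A quadratic form `xᵀ A x` with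
`tr (A adj M) = 0` changes sign under `T`, so the change of variables `x ↦ T x` shows that its
integral against `fS ∘ R` vanishes. The forms `(a+b) x² - (a-b) y²` and `c (x² + y²) + 2 a x y`
are of this kind, and the vanishing of their integrals says `(a+b) Q₁₁ = (a-b) Q₂₂` and
`2 a Q₁₂ = -c (Q₁₁ + Q₂₂)`, which is the claim.
-/

open MeasureTheory

section AddHaar

variable {E F : Type*} [NormedAddCommGroup E] [NormedSpace ℝ E] [MeasurableSpace E] [BorelSpace E]
  [FiniteDimensional ℝ E] [NormedAddCommGroup F] [NormedSpace ℝ F]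
  (μ : Measure E) [μ.IsAddHaarMeasure] {T : E →ₗ[ℝ] E}

theorem integral_comp_linearMap_of_abs_det_eq_one (hT : |LinearMap.det T| = 1) (g : E → F) :
    ∫ x, g (T x) ∂μ = ∫ x, g x ∂μ := by
  have hT₀ : LinearMap.det T ≠ 0 := by
    intro h
    simp [h] at hT
  let e := (T.equivOfDetNeZero hT₀).toContinuousLinearEquiv.toHomeomorph.toMeasurableEquiv
  have hmap : μ.map e = μ := by
    rw [show (e : E → E) = T from rfl, Measure.map_linearMap_addHaar_eq_smul_addHaar μ hT₀,
      abs_inv, hT]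
    simp
  calc ∫ x, g (T x) ∂μ = ∫ x, g (e x) ∂μ := rfl
    _ = ∫ x, g x ∂μ := by rw [← integral_map_equiv e g, hmap]

theorem integral_eq_zero_of_comp_linearMap_eq_neg (hT : |LinearMap.det T| = 1) {u : E → F}
    (hu : ∀ x, u (T x) = -u x) : ∫ x, u x ∂μ = 0 := by
  have h := integral_comp_linearMap_of_abs_det_eq_one μ hT u
  simp only [hu, integral_neg] at h
  have : IsAddTorsionFree F := .of_isTorsionFree ℝ F
  exact self_eq_neg.1 h.symm

end AddHaar

def ellipticForm (a b c : ℝ) (x : ℝ × ℝ) : ℝ :=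
  a * (x.1 ^ 2 + x.2 ^ 2) + b * (x.1 ^ 2 - x.2 ^ 2) + 2 * c * (x.1 * x.2)

noncomputable def ellipticQuarterTurn (a b c d : ℝ) : ℝ × ℝ →ₗ[ℝ] ℝ × ℝ :=
  Matrix.toLin (Module.Basis.finTwoProd ℝ) (Module.Basis.finTwoProd ℝ)
    !![-c / d, -(a - b) / d; (a + b) / d, c / d]

section EllipticQuarterTurn

variable {a b c d : ℝ}

theorem ellipticQuarterTurn_apply (x : ℝ × ℝ) :
    ellipticQuarterTurn a b c d x =
      (-c / d * x.1 + -(a - b) / d * x.2, (a + b) / d * x.1 + c / d * x.2) :=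
  Matrix.toLin_finTwoProd_apply ..

variable (hd : d ^ 2 = a ^ 2 - b ^ 2 - c ^ 2) (hd₀ : d ≠ 0)
include hd hd₀

theorem det_ellipticQuarterTurn : LinearMap.det (ellipticQuarterTurn a b c d) = 1 := by
  rw [ellipticQuarterTurn, LinearMap.det_toLin, Matrix.det_fin_two_of]
  field_simp
  linear_combination -hd

theorem ellipticForm_ellipticQuarterTurn (x : ℝ × ℝ) :
    ellipticForm a b c (ellipticQuarterTurn a b c d x) = ellipticForm a b c x := by
  simp only [ellipticForm, ellipticQuarterTurn_apply]
  field_simp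
  linear_combination
    -(a * (x.1 ^ 2 + x.2 ^ 2) + b * (x.1 ^ 2 - x.2 ^ 2) + 2 * c * (x.1 * x.2)) * hd

variable {w : ℝ × ℝ → ℝ} (hw : ∀ x, w (ellipticQuarterTurn a b c d x) = w x)
include hw

theorem integral_mul_eq_zero_of_ellipticQuarterTurn_eq_neg {q : ℝ × ℝ → ℝ}
    (hq : ∀ x, q (ellipticQuarterTurn a b c d x) = -q x) : ∫ x, q x * w x = 0 :=
  integral_eq_zero_of_comp_linearMap_eq_neg volume
    (by rw [det_ellipticQuarterTurn hd hd₀, abs_one]) fun x => by rw [hq, hw, neg_mul]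

theorem add_mul_integral_fst_mul_fst_eq_of_comp_ellipticQuarterTurn
    (h₁₁ : Integrable fun x : ℝ × ℝ => x.1 * x.1 * w x)
    (h₂₂ : Integrable fun x : ℝ × ℝ => x.2 * x.2 * w x) :
    (a + b) * ∫ x, x.1 * x.1 * w x = (a - b) * ∫ x, x.2 * x.2 * w x := by
  have h := integral_mul_eq_zero_of_ellipticQuarterTurn_eq_neg hd hd₀ hw
    (q := fun x => (a + b) * (x.1 * x.1) - (a - b) * (x.2 * x.2)) fun x => by
      simp only [ellipticQuarterTurn_apply]
      field_simp
      linear_combination ((a + b) * x.1 ^ 2 - (a - b) * x.2 ^ 2) * hd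
  have hsplit : ∀ x : ℝ × ℝ, ((a + b) * (x.1 * x.1) - (a - b) * (x.2 * x.2)) * w x
      = (a + b) * (x.1 * x.1 * w x) - (a - b) * (x.2 * x.2 * w x) := fun x => by ring
  rw [integral_congr_ae (.of_forall hsplit), integral_sub (h₁₁.const_mul _) (h₂₂.const_mul _),
    integral_const_mul, integral_const_mul] at h
  linear_combination h

theorem two_mul_integral_fst_mul_snd_eq_of_comp_ellipticQuarterTurn
    (h₁₁ : Integrable fun x : ℝ × ℝ => x.1 * x.1 * w x)
    (h₁₂ : Integrable fun x : ℝ × ℝ => x.1 * x.2 * w x)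
    (h₂₂ : Integrable fun x : ℝ × ℝ => x.2 * x.2 * w x) :
    2 * a * ∫ x, x.1 * x.2 * w x = -c * ((∫ x, x.1 * x.1 * w x) + ∫ x, x.2 * x.2 * w x) := by
  have h := integral_mul_eq_zero_of_ellipticQuarterTurn_eq_neg hd hd₀ hw
    (q := fun x => c * (x.1 * x.1) + 2 * a * (x.1 * x.2) + c * (x.2 * x.2)) fun x => by
      simp only [ellipticQuarterTurn_apply]
      field_simp
      linear_combination (c * x.1 ^ 2 + 2 * a * (x.1 * x.2) + c * x.2 ^ 2) * hd
  have hsplit : ∀ x : ℝ × ℝ, (c * (x.1 * x.1) + 2 * a * (x.1 * x.2) + c * (x.2 * x.2)) * w x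
      = c * (x.1 * x.1 * w x) + 2 * a * (x.1 * x.2 * w x) + c * (x.2 * x.2 * w x) :=
    fun x => by ring
  rw [integral_congr_ae (.of_forall hsplit),
    integral_add ((h₁₁.const_mul _).fun_add (h₁₂.const_mul _)) (h₂₂.const_mul _),
    integral_add (h₁₁.const_mul _) (h₁₂.const_mul _), integral_const_mul, integral_const_mul,
    integral_const_mul] at h
  linear_combination h

end EllipticQuarterTurn

/-- For a brightness profile `f_S(a(x²+y²) + b(x²−y²) + 2cxy)` with `a+b > 0`
and `a² − b² > c²`, the ellipticities of the image are
`ε₁ = (Q₁₁−Q₂₂)/(Q₁₁+Q₂₂) = −b/a` and `ε₂ = 2Q₁₂/(Q₁₁+Q₂₂) = −c/a`. -/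
theorem stmt14 (fS : ℝ → ℝ) (a b c : ℝ) (hab : 0 < a + b)
    (habc : c ^ 2 < a ^ 2 - b ^ 2)
    (R : ℝ × ℝ → ℝ)
    (hR : ∀ p : ℝ × ℝ, R p = a * (p.1 ^ 2 + p.2 ^ 2) + b * (p.1 ^ 2 - p.2 ^ 2)
        + 2 * c * (p.1 * p.2))
    (h11 : Integrable (fun p : ℝ × ℝ => p.1 * p.1 * fS (R p)))
    (h12 : Integrable (fun p : ℝ × ℝ => p.1 * p.2 * fS (R p)))
    (h22 : Integrable (fun p : ℝ × ℝ => p.2 * p.2 * fS (R p)))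
    (Q₁₁ Q₁₂ Q₂₂ : ℝ)
    (hQ11 : Q₁₁ = ∫ p : ℝ × ℝ, p.1 * p.1 * fS (R p))
    (hQ12 : Q₁₂ = ∫ p : ℝ × ℝ, p.1 * p.2 * fS (R p))
    (hQ22 : Q₂₂ = ∫ p : ℝ × ℝ, p.2 * p.2 * fS (R p))
    (hQne : Q₁₁ + Q₂₂ ≠ 0) :
    (Q₁₁ - Q₂₂) / (Q₁₁ + Q₂₂) = -b / a ∧
    2 * Q₁₂ / (Q₁₁ + Q₂₂) = -c / a := by
  have hD : 0 < a ^ 2 - b ^ 2 - c ^ 2 := by linarith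
  have ha : 0 < a := by nlinarith [sq_nonneg c]
  set d := √(a ^ 2 - b ^ 2 - c ^ 2)
  have hd : d ^ 2 = a ^ 2 - b ^ 2 - c ^ 2 := Real.sq_sqrt hD.le
  have hd₀ : d ≠ 0 := (Real.sqrt_pos.2 hD).ne'
  have hRT : ∀ x, fS (R (ellipticQuarterTurn a b c d x)) = fS (R x) := fun x => by
    rw [show R = ellipticForm a b c from funext hR, ellipticForm_ellipticQuarterTurn hd hd₀]
  have h₁ := add_mul_integral_fst_mul_fst_eq_of_comp_ellipticQuarterTurn hd hd₀ hRT h11 h22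
  have h₂ := two_mul_integral_fst_mul_snd_eq_of_comp_ellipticQuarterTurn hd hd₀ hRT h11 h12 h22
  rw [← hQ11, ← hQ22] at h₁
  rw [← hQ11, ← hQ12, ← hQ22] at h₂
  constructor <;> rw [div_eq_div_iff hQne ha.ne']
  · linear_combination h₁
  · linear_combination h₂
end
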